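/- Let H ∈ [0, 1/2), set R := artanh(2H), let C > 1, and define g_C : ℝ → ℝ by g_C(s) = (2H·sinh s + C·√(1−4H²))/cosh s and M_C := R + arcosh(C). Then for every s₀ > M_C, the function t ↦ g_C(t)/√(1 − g_C(t)²) is integrable on the interval (M_C, s₀); that is, the improper integral ∫_{M_C}^{s₀} g_C(t)/√(1 − g_C(t)²) dt converges, even though the integrand tends to +∞ as t → M_C⁺. -/

import Mathlib

open Real MeasureTheory

/-- The inverse hyperbolic tangent. -/
noncomputable def artanh (x : ℝ) : ℝ := Real.log ((1 + x) / (1 - x)) / 2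

/-- The inverse hyperbolic cosine (on `[1, ∞)`). -/
noncomputable def arcosh (x : ℝ) : ℝ := Real.log (x + Real.sqrt (x ^ 2 - 1))

open Set

/-!
Write `p = 2H`, `q = √(1 - p²)`, `R = artanh p` and `A = arcosh C`. Since `cosh R = 1/q` and
`sinh R = p/q`, the defect of `g_C` from `1` is `(1 - g_C t) cosh t = q (cosh (t - R) - C)`, and
convexity of `cosh` past `A` gives `cosh (t - R) - C ≥ sinh A · (t - M_C)`. Hence `1 - g_C` vanishes
at least linearly at `M_C`, so on `(M_C, s₀)`, where `0 ≤ g_C < 1`, the integrand is at most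
`1/√(1 - g_C) = O((t - M_C)^(-1/2))`, which is integrable.
-/

theorem artanh_eq_real_artanh {x : ℝ} (hx : x ∈ Icc (-1) 1) :
    _root_.artanh x = Real.artanh x := by
  rw [Real.artanh_eq_half_log hx, _root_.artanh]
  ring

theorem arcosh_eq_real_arcosh : _root_.arcosh = Real.arcosh := rfl

theorem cosh_add_sinh_mul_le_cosh_add {a x : ℝ} (ha : 0 ≤ a) (hx : 0 ≤ x) :
    cosh a + sinh a * x ≤ cosh (x + a) := by
  have hcosh : 1 ≤ cosh x := one_le_cosh x
  have hsinh : x ≤ sinh x := self_le_sinh_iff.mpr hx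
  have hsinh_a : 0 ≤ sinh a := sinh_nonneg_iff.mpr ha
  rw [cosh_add]
  nlinarith [cosh_pos a]

theorem integrableOn_Ioo_of_norm_le_div_sqrt {f : ℝ → ℝ} {a b K : ℝ}
    (hf : AEStronglyMeasurable f (volume.restrict (Ioo a b)))
    (hbound : ∀ t ∈ Ioo a b, ‖f t‖ ≤ K / √(t - a)) : IntegrableOn f (Ioo a b) := by
  have hpow : IntervalIntegrable (fun t : ℝ => (t - a) ^ (-(1 / 2) : ℝ)) volume a b := by
    simpa using (intervalIntegral.intervalIntegrable_rpow' (r := -(1 / 2)) (a := 0) (b := b - a)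
      (by norm_num)).comp_sub_right a
  have hdom : IntegrableOn (fun t : ℝ => K * (t - a) ^ (-(1 / 2) : ℝ)) (Ioo a b) :=
    (hpow.def'.mono_set (Ioo_subset_Ioc_self.trans Ioc_subset_uIoc)).const_mul K
  refine hdom.integrable.mono' hf ?_
  rw [ae_restrict_iff' measurableSet_Ioo]
  filter_upwards with t ht
  rw [rpow_neg (sub_nonneg.mpr ht.1.le), ← sqrt_eq_rpow, ← div_eq_mul_inv]
  exact hbound t ht

theorem div_sqrt_one_sub_sq_le {y : ℝ} (hy0 : 0 ≤ y) (hy1 : y < 1) :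
    y / √(1 - y ^ 2) ≤ 1 / √(1 - y) :=
  div_le_div₀ zero_le_one hy1.le (sqrt_pos.mpr (by linarith))
    (sqrt_le_sqrt (by nlinarith))

noncomputable def gC (H C s : ℝ) : ℝ :=
  (2 * H * sinh s + C * √(1 - 4 * H ^ 2)) / cosh s

theorem continuous_gC (H C : ℝ) : Continuous (gC H C) :=
  ((continuous_const.mul continuous_sinh).add continuous_const).div continuous_cosh
    fun s => (cosh_pos s).ne'

section gC

variable {H C : ℝ}

theorem gC_nonneg (hH : 0 ≤ H) (hC : 0 ≤ C) {t : ℝ} (ht : 0 ≤ t) : 0 ≤ gC H C t := by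
  have : 0 ≤ sinh t := sinh_nonneg_iff.mpr ht
  unfold gC
  positivity

theorem one_sub_gC_mul_cosh (hH : 2 * H ∈ Ioo (-1) 1) (t : ℝ) :
    (1 - gC H C t) * cosh t = √(1 - 4 * H ^ 2) * (cosh (t - Real.artanh (2 * H)) - C) := by
  have hq : √(1 - 4 * H ^ 2) ≠ 0 := (sqrt_pos.mpr (by nlinarith [hH.1, hH.2])).ne'
  rw [cosh_sub, cosh_artanh hH, sinh_artanh hH, gC, show (2 * H) ^ 2 = 4 * H ^ 2 by ring]
  generalize √(1 - 4 * H ^ 2) = q at hq ⊢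
  field_simp
  ring

theorem mul_sub_le_one_sub_gC_mul_cosh (hH : 2 * H ∈ Ioo (-1) 1) (hC : 1 ≤ C) {t : ℝ}
    (ht : Real.artanh (2 * H) + Real.arcosh C ≤ t) :
    √(1 - 4 * H ^ 2) * √(C ^ 2 - 1) * (t - (Real.artanh (2 * H) + Real.arcosh C)) ≤
      (1 - gC H C t) * cosh t := by
  set M := Real.artanh (2 * H) + Real.arcosh C
  have hconvex := cosh_add_sinh_mul_le_cosh_add (arcosh_nonneg hC) (sub_nonneg.mpr ht)
  rw [cosh_arcosh hC, sinh_arcosh hC, show t - M + Real.arcosh C = t - Real.artanh (2 * H) by ring]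
    at hconvex
  rw [one_sub_gC_mul_cosh hH, mul_assoc]
  exact mul_le_mul_of_nonneg_left (by linarith) (sqrt_nonneg _)

theorem exists_norm_gC_div_sqrt_le (hH0 : 0 ≤ H) (hH : H < 1 / 2) (hC : 1 < C) (s₀ : ℝ) :
    ∃ K, ∀ t ∈ Ioo (Real.artanh (2 * H) + Real.arcosh C) s₀,
      ‖gC H C t / √(1 - gC H C t ^ 2)‖ ≤ K / √(t - (Real.artanh (2 * H) + Real.arcosh C)) := by
  set M := Real.artanh (2 * H) + Real.arcosh C
  have hH2 : 2 * H ∈ Ioo (-1) 1 := ⟨by linarith, by linarith⟩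
  have hM : 0 ≤ M := add_nonneg (artanh_nonneg (by linarith)) (arcosh_nonneg hC.le)
  set k := √(1 - 4 * H ^ 2) * √(C ^ 2 - 1)
  have hk : 0 < k := mul_pos (sqrt_pos.mpr (by nlinarith)) (sqrt_pos.mpr (by nlinarith))
  set c := k / cosh s₀
  have hc : 0 < c := div_pos hk (cosh_pos s₀)
  refine ⟨(√c)⁻¹, fun t ⟨hMt, hts⟩ => ?_⟩
  have ht0 : 0 ≤ t := hM.trans hMt.le
  have hg0 : 0 ≤ gC H C t := gC_nonneg hH0 (by linarith) ht0
  have hlower := mul_sub_le_one_sub_gC_mul_cosh hH2 hC.le hMt.le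
  have hgap : 0 < c * (t - M) := mul_pos hc (sub_pos.mpr hMt)
  have hcosh : cosh t ≤ cosh s₀ := cosh_le_cosh.mpr (by
    rw [abs_of_nonneg ht0, abs_of_nonneg (ht0.trans hts.le)]; exact hts.le)
  have hg1 : gC H C t < 1 := by
    by_contra! hg1
    nlinarith [mul_nonpos_of_nonpos_of_nonneg (sub_nonpos.mpr hg1) (cosh_pos t).le]
  have hc_gap : c * (t - M) ≤ 1 - gC H C t := by
    rw [div_mul_eq_mul_div, div_le_iff₀ (cosh_pos s₀)]
    nlinarith [mul_le_mul_of_nonneg_left hcosh (sub_nonneg.mpr hg1.le)]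
  calc ‖gC H C t / √(1 - gC H C t ^ 2)‖ = gC H C t / √(1 - gC H C t ^ 2) :=
        norm_of_nonneg (div_nonneg hg0 (sqrt_nonneg _))
    _ ≤ 1 / √(1 - gC H C t) := div_sqrt_one_sub_sq_le hg0 hg1
    _ ≤ 1 / √(c * (t - M)) := one_div_le_one_div_of_le (sqrt_pos.mpr hgap) (sqrt_le_sqrt hc_gap)
    _ = (√c)⁻¹ / √(t - M) := by rw [sqrt_mul hc.le, one_div, mul_inv, div_eq_mul_inv]

end gC

/-- For `H ∈ [0, 1/2)`, `R = artanh(2H)`, `C > 1`,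
`g_C(s) = (2H·sinh s + C·√(1−4H²))/cosh s` and `M_C = R + arcosh C`,
the function `t ↦ g_C(t)/√(1 − g_C(t)²)` is integrable on `(M_C, s₀)` for every
`s₀ > M_C`, i.e. the improper integral `∫_{M_C}^{s₀} g_C/√(1−g_C²)` converges. -/
theorem gC_integrable_near_MC
    (H : ℝ) (hH0 : 0 ≤ H) (hH : H < 1 / 2) (R : ℝ) (hR : R = _root_.artanh (2 * H))
    (C : ℝ) (hC : 1 < C) (g : ℝ → ℝ)
    (hg : ∀ s : ℝ, g s = (2 * H * Real.sinh s + C * Real.sqrt (1 - 4 * H ^ 2)) / Real.cosh s)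
    (M : ℝ) (hM : M = R + _root_.arcosh C) :
    ∀ s₀ : ℝ, M < s₀ →
      IntegrableOn (fun t : ℝ => g t / Real.sqrt (1 - g t ^ 2)) (Set.Ioo M s₀) := by
  intro s₀ _
  obtain rfl : g = gC H C := funext hg
  obtain rfl : M = Real.artanh (2 * H) + Real.arcosh C := by
    rw [hM, hR, artanh_eq_real_artanh ⟨by linarith, by linarith⟩, arcosh_eq_real_arcosh]
  obtain ⟨K, hK⟩ := exists_norm_gC_div_sqrt_le hH0 hH hC s₀
  have hmeas : Measurable fun t => gC H C t / √(1 - gC H C t ^ 2) :=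
    (continuous_gC H C).measurable.div
      (continuous_sqrt.comp (continuous_const.sub ((continuous_gC H C).pow 2))).measurable
  exact integrableOn_Ioo_of_norm_le_div_sqrt hmeas.aestronglyMeasurable hK
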